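/- arXiv:1905.04095 — 3 statements merged into one kernel-verified Lean document; each statement's English description precedes it below -/
import Mathlib

section
/- Let f, g be analytic functions on ℝ (real-analytic, or restrictions of holomorphic functions on a strip), not identically equal, and let h : ℝ → ℂ be nowhere zero with Φ = h/|h| analytic. Suppose |g(x)| = |f(x)| and |g(x) - h(x)| = |f(x) - h(x)| for all x ∈ ℝ. Then either g = f identically or g = conj(f)·Φ² identically. -/
/-!
A point `w` with `|w| = |z|` and `|w - c| = |z - c|` is `z` or the reflection `conj z * (c/|c|)²`
of `z` in the line `ℝ c`, so at every `x` one of the two analytic functions `g - f` and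
`g · conj Φ - conj f · Φ` vanishes. If `g - f` does not vanish at some point, it does not vanish
near it, so the second function vanishes on an open set and hence everywhere.
-/

open Complex ComplexConjugate Set Topology

theorem AnalyticOnNhd.eqOn_zero_or_eqOn_zero {𝕜 : Type*} [NontriviallyNormedField 𝕜]
    {E : Type*} [NormedAddCommGroup E] [NormedSpace 𝕜 E]
    {F : Type*} [NormedAddCommGroup F] [NormedSpace 𝕜 F]
    {f g : E → F} {U : Set E} (hf : AnalyticOnNhd 𝕜 f U) (hg : AnalyticOnNhd 𝕜 g U)
    (hUo : IsOpen U) (hU : IsPreconnected U) (hfg : ∀ x ∈ U, f x = 0 ∨ g x = 0) :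
    EqOn f 0 U ∨ EqOn g 0 U := by
  refine or_iff_not_imp_left.2 fun hf0 => ?_
  obtain ⟨x₀, hx₀U, hfx₀⟩ := not_forall₂.1 hf0
  have hg_near : g =ᶠ[𝓝 x₀] 0 := by
    filter_upwards [(hf x₀ hx₀U).continuousAt.eventually_ne hfx₀, hUo.mem_nhds hx₀U]
      with x hfx hxU
    exact (hfg x hxU).resolve_left hfx
  exact hg.eqOn_zero_of_preconnected_of_eventuallyEq_zero hU hx₀U hg_near

namespace Complex

theorem eq_or_mul_conj_eq_conj_mul_of_norm_eq {w z c : ℂ} (h₀ : ‖w‖ = ‖z‖)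
    (hc : ‖w - c‖ = ‖z - c‖) : w = z ∨ w * conj c = conj z * c := by
  have hsq₀ : w * conj w = z * conj z := by
    rw [mul_conj, mul_conj, normSq_eq_norm_sq, normSq_eq_norm_sq, h₀]
  have hsqc : (w - c) * conj (w - c) = (z - c) * conj (z - c) := by
    rw [mul_conj, mul_conj, normSq_eq_norm_sq, normSq_eq_norm_sq, hc]
  simp only [map_sub] at hsqc
  have hre : w * conj c + conj w * c = z * conj c + conj z * c := by
    linear_combination hsq₀ - hsqc
  have hprod : (w - z) * (w * conj c - conj z * c) = 0 := by
    linear_combination w * hre - c * hsq₀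
  rcases mul_eq_zero.1 hprod with h | h
  · exact .inl (sub_eq_zero.1 h)
  · exact .inr (sub_eq_zero.1 h)

theorem eq_conj_mul_sq_of_mul_conj_eq {w z u : ℂ} (hu : ‖u‖ = 1)
    (h : w * conj u = conj z * u) : w = conj z * u ^ 2 := by
  have hu' : conj u * u = 1 := by
    rw [mul_comm, mul_conj, normSq_eq_norm_sq, hu]
    norm_num
  linear_combination u * h - w * hu'

end Complex

theorem stmt_8_general (f g : ℝ → ℂ) (h Φ : ℝ → ℂ)
    (hf : AnalyticOnNhd ℝ f Set.univ) (hg : AnalyticOnNhd ℝ g Set.univ)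
    (hh : ∀ x : ℝ, h x ≠ 0)
    (hΦ : ∀ x : ℝ, Φ x = h x / (‖h x‖ : ℂ))
    (hΦa : AnalyticOnNhd ℝ Φ Set.univ)
    (hmod : ∀ x : ℝ, ‖g x‖ = ‖f x‖)
    (hmod' : ∀ x : ℝ, ‖g x - h x‖ = ‖f x - h x‖) :
    (∀ x : ℝ, g x = f x) ∨
    (∀ x : ℝ, g x = (starRingEnd ℂ) (f x) * (Φ x) ^ 2) := by
  have conj_analytic {k : ℝ → ℂ} (hk : AnalyticOnNhd ℝ k univ) :
      AnalyticOnNhd ℝ (fun x => conj (k x)) univ :=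
    conjCLE.toContinuousLinearMap.comp_analyticOnNhd hk
  have hΦ_norm (x : ℝ) : ‖Φ x‖ = 1 := by
    rw [hΦ x, norm_div, norm_real, norm_norm, div_self (norm_ne_zero_iff.2 (hh x))]
  have hpt (x : ℝ) (_ : x ∈ univ) :
      g x - f x = 0 ∨ g x * conj (Φ x) - conj (f x) * Φ x = 0 := by
    refine (eq_or_mul_conj_eq_conj_mul_of_norm_eq (hmod x) (hmod' x)).imp sub_eq_zero.2
      fun hx => ?_
    rw [hΦ x, map_div₀, conj_ofReal]
    linear_combination hx / (‖h x‖ : ℂ)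
  rcases (hg.sub hf).eqOn_zero_or_eqOn_zero
      ((hg.mul (conj_analytic hΦa)).sub ((conj_analytic hf).mul hΦa))
      isOpen_univ isPreconnected_univ hpt with hgf | hgf
  · exact .inl fun x => sub_eq_zero.1 (hgf (mem_univ x))
  · exact .inr fun x =>
      eq_conj_mul_sq_of_mul_conj_eq (hΦ_norm x) (sub_eq_zero.1 (hgf (mem_univ x)))

theorem stmt_8 (f g : ℝ → ℂ) (h Φ : ℝ → ℂ)
    (hf : AnalyticOnNhd ℝ f Set.univ) (hg : AnalyticOnNhd ℝ g Set.univ)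
    (hne : f ≠ g)
    (hh : ∀ x : ℝ, h x ≠ 0)
    (hΦ : ∀ x : ℝ, Φ x = h x / (‖h x‖ : ℂ))
    (hΦa : AnalyticOnNhd ℝ Φ Set.univ)
    (hmod : ∀ x : ℝ, ‖g x‖ = ‖f x‖)
    (hmod' : ∀ x : ℝ, ‖g x - h x‖ = ‖f x - h x‖) :
    (∀ x : ℝ, g x = f x) ∨
    (∀ x : ℝ, g x = (starRingEnd ℂ) (f x) * (Φ x) ^ 2) :=
  stmt_8_general f g h Φ hf hg hh hΦ hΦa hmod hmod'
end

section
/- For any complex numbers a, b, c with |c| = |a| and |c - b| = |a - b|, either c = a, or c = conj(a)·b²/|b|² (when b ≠ 0); i.e., the two circles {|z| = |a|} and {|z - b| = |a - b|} intersect in at most the two points a and conj(a)b²/|b|². -/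
open Complex

open ComplexConjugate

theorem Complex.eq_or_mul_conj_eq_of_norm_eq_of_norm_sub_eq {a b c : ℂ} (h1 : ‖c‖ = ‖a‖)
    (h2 : ‖c - b‖ = ‖a - b‖) : c = a ∨ c * conj b = conj a * b := by
  have e1 : c * conj c = a * conj a := by rw [mul_conj', mul_conj', h1]
  have e2 : (c - b) * conj (c - b) = (a - b) * conj (a - b) := by
    rw [mul_conj', mul_conj', h2]
  simp only [map_sub] at e2
  have key : (c - a) * (c * conj b - conj a * b) = 0 := by
    linear_combination (c - b) * e1 - c * e2
  simpa only [mul_eq_zero, sub_eq_zero] using key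

theorem Complex.eq_conj_mul_sq_div_of_mul_conj_eq {a b c : ℂ} (hb : b ≠ 0)
    (h : c * conj b = conj a * b) : c = conj a * b ^ 2 / ((‖b‖ : ℝ) : ℂ) ^ 2 := by
  have hb' : conj b ≠ 0 := (map_ne_zero _).2 hb
  rw [← mul_conj', eq_div_iff (mul_ne_zero hb hb')]
  linear_combination b * h

theorem stmt_9 (a b c : ℂ) (hb : b ≠ 0)
    (h1 : ‖c‖ = ‖a‖)
    (h2 : ‖c - b‖ = ‖a - b‖) :
    c = a ∨ c = (starRingEnd ℂ) a * b ^ 2 / (((‖b‖ : ℝ) : ℂ)) ^ 2 :=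
  (eq_or_mul_conj_eq_of_norm_eq_of_norm_sub_eq h1 h2).imp_right
    (eq_conj_mul_sq_div_of_mul_conj_eq hb)
end

section
/- Let F, G be holomorphic on the unit disc, not identically zero, with |F(x)| = |G(x)| for x ∈ (-1,1) and |F(e^{iθ}x)| = |G(e^{iθ}x)| for x ∈ (-1,1), where θ/π is irrational. Then F and G have exactly the same zeros in 𝔻 (with multiplicities). -/
/-!
Write `f^♯(z) = conj (f (c² z̄))` for the reflection of `f` across the line `ℝc`, `|c| = 1`.
On that line `f f^♯ = |f|²`, so `|F| = |G|` there forces `F F^♯ = G G^♯` on the disc by the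
identity theorem. Comparing orders of vanishing, the difference `D = ord F - ord G` of the
multiplicities satisfies `D(c² z̄) = -D(z)` for `c = 1` and `c = e^{iθ}`; composing the two
reflections gives `D(e^{2iθ} z) = D(z)`. If `D(w) ≠ 0`, then `w ≠ 0` and `F G` vanishes on the
orbit of `w` under the rotation by `2θ`, which is infinite because `θ/π` is irrational, and lies on
the compact circle `|z| = |w|` inside the disc: this contradicts the isolation of zeros.
-/

open Complex Metric Filter Set Topology ComplexConjugate

lemma iteratedDeriv_conj_conj (f : ℂ → ℂ) (n : ℕ) :
    iteratedDeriv n (conj ∘ f ∘ conj) = conj ∘ iteratedDeriv n f ∘ conj := by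
  induction n with
  | zero => rfl
  | succ n ih => rw [iteratedDeriv_succ, iteratedDeriv_succ, ih, deriv_conj_conj]

lemma AnalyticAt.conj_conj {f : ℂ → ℂ} {w : ℂ} (hf : AnalyticAt ℂ f (conj w)) :
    AnalyticAt ℂ (conj ∘ f ∘ conj) w := by
  rw [Complex.analyticAt_iff_eventually_differentiableAt] at hf ⊢
  filter_upwards [(continuous_conj.tendsto w).eventually hf] with z hz
  exact differentiableAt_conj_conj_iff.mpr hz

lemma analyticOrderAt_conj_conj {f : ℂ → ℂ} {w : ℂ} (hf : AnalyticAt ℂ f (conj w)) :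
    analyticOrderAt (conj ∘ f ∘ conj) w = analyticOrderAt f (conj w) := by
  refine ENat.eq_of_forall_natCast_le_iff fun n => ?_
  rw [natCast_le_analyticOrderAt_iff_iteratedDeriv_eq_zero hf.conj_conj,
    natCast_le_analyticOrderAt_iff_iteratedDeriv_eq_zero hf]
  simp [iteratedDeriv_conj_conj]

/-- For `‖c‖ = 1`, `z ↦ c ^ 2 * conj z` is the reflection across the line `ℝ • c`. -/
def schwarzReflection (c : ℂ) (f : ℂ → ℂ) : ℂ → ℂ := conj ∘ (f ∘ (c ^ 2 * ·)) ∘ conj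

@[simp]
lemma schwarzReflection_apply (c : ℂ) (f : ℂ → ℂ) (z : ℂ) :
    schwarzReflection c f z = conj (f (c ^ 2 * conj z)) := rfl

section Reflection

variable {f g : ℂ → ℂ} {r : ℝ} {c w : ℂ}

lemma AnalyticAt.schwarzReflection (hf : AnalyticAt ℂ f (c ^ 2 * conj w)) :
    AnalyticAt ℂ (schwarzReflection c f) w :=
  AnalyticAt.conj_conj (hf.comp (by fun_prop))

lemma analyticOrderAt_schwarzReflection (hc : c ≠ 0) (hf : AnalyticAt ℂ f (c ^ 2 * conj w)) :
    analyticOrderAt (schwarzReflection c f) w = analyticOrderAt f (c ^ 2 * conj w) := by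
  rw [schwarzReflection, analyticOrderAt_conj_conj (hf.comp (by fun_prop)),
    analyticOrderAt_comp_of_deriv_ne_zero (by fun_prop) (by simp [hc])]

lemma norm_sq_mul_conj (hc : ‖c‖ = 1) (z : ℂ) : ‖c ^ 2 * conj z‖ = ‖z‖ := by
  simp [hc]

lemma sq_mul_conj_mul_ofReal (hc : ‖c‖ = 1) (x : ℝ) : c ^ 2 * conj (c * x) = c * x := by
  have : c * conj c = 1 := by rw [mul_conj, normSq_eq_norm_sq, hc]; norm_num
  rw [map_mul, conj_ofReal]
  linear_combination c * x * this

lemma AnalyticOnNhd.mul_schwarzReflection (hf : AnalyticOnNhd ℂ f (ball 0 r))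
    (hc : ‖c‖ = 1) : AnalyticOnNhd ℂ (f * schwarzReflection c f) (ball 0 r) := fun z hz =>
  (hf z hz).mul <| AnalyticAt.schwarzReflection <| hf _ <| by
    rwa [mem_ball_zero_iff, norm_sq_mul_conj hc, ← mem_ball_zero_iff]

lemma eqOn_mul_schwarzReflection (hf : AnalyticOnNhd ℂ f (ball 0 r))
    (hg : AnalyticOnNhd ℂ g (ball 0 r)) (hr : 0 < r) (hc : ‖c‖ = 1)
    (h : ∀ x : ℝ, x ∈ Ioo (-r) r → ‖f (c * x)‖ = ‖g (c * x)‖) :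
    EqOn (f * schwarzReflection c f) (g * schwarzReflection c g) (ball 0 r) := by
  have hline : Tendsto (fun x : ℝ => c * x) (𝓝[≠] 0) (𝓝[≠] 0) := by
    refine tendsto_nhdsWithin_of_tendsto_nhds_of_eventually_within _
      (((by fun_prop : Continuous fun x : ℝ => c * x).tendsto' 0 0 (by simp)).mono_left
        nhdsWithin_le_nhds) ?_
    filter_upwards [self_mem_nhdsWithin] with x hx
    simpa [ne_zero_of_norm_ne_zero (hc.trans_ne one_ne_zero)] using hx
  have hsegment : ∀ᶠ x : ℝ in 𝓝[≠] 0, (f * schwarzReflection c f) (c * x) =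
      (g * schwarzReflection c g) (c * x) := by
    filter_upwards [nhdsWithin_le_nhds (Ioo_mem_nhds (neg_neg_of_pos hr) hr)] with x hx
    simp only [Pi.mul_apply, schwarzReflection_apply, sq_mul_conj_mul_ofReal hc, mul_conj,
      normSq_eq_norm_sq, h x hx]
  exact (hf.mul_schwarzReflection hc).eqOn_of_preconnected_of_frequently_eq
    (hg.mul_schwarzReflection hc) (convex_ball 0 r).isPreconnected (mem_ball_self hr)
    (hline.frequently hsegment.frequently)

lemma analyticOrderAt_add_analyticOrderAt_reflection_eq
    (hf : AnalyticOnNhd ℂ f (ball 0 r)) (hg : AnalyticOnNhd ℂ g (ball 0 r)) (hc : ‖c‖ = 1)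
    (hfg : EqOn (f * schwarzReflection c f) (g * schwarzReflection c g) (ball 0 r))
    (hw : w ∈ ball 0 r) :
    analyticOrderAt f w + analyticOrderAt f (c ^ 2 * conj w) =
      analyticOrderAt g w + analyticOrderAt g (c ^ 2 * conj w) := by
  have hw' : c ^ 2 * conj w ∈ ball 0 r := by
    rwa [mem_ball_zero_iff, norm_sq_mul_conj hc, ← mem_ball_zero_iff]
  have hc0 : c ≠ 0 := ne_zero_of_norm_ne_zero (hc.trans_ne one_ne_zero)
  rw [← analyticOrderAt_schwarzReflection hc0 (hf _ hw'),
    ← analyticOrderAt_schwarzReflection hc0 (hg _ hw'),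
    ← analyticOrderAt_mul (hf w hw) (hf _ hw').schwarzReflection,
    ← analyticOrderAt_mul (hg w hw) (hg _ hw').schwarzReflection,
    analyticOrderAt_congr (hfg.eventuallyEq_of_mem (isOpen_ball.mem_nhds hw))]

end Reflection

lemma Circle.not_isOfFinOrder_exp {θ : ℝ} (hθ : Irrational (θ / Real.pi)) :
    ¬IsOfFinOrder (Circle.exp θ) := by
  rw [isOfFinOrder_iff_pow_eq_one]
  rintro ⟨n, hn, h⟩
  obtain ⟨m, hm⟩ := Circle.exp_eq_one.1 ((Circle.exp_natCast_mul θ n).trans h)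
  refine hθ ⟨2 * m / n, ?_⟩
  have hn' : (n : ℝ) ≠ 0 := by positivity
  push_cast
  field_simp
  linarith

lemma AnalyticOnNhd.natCast_analyticOrderNatAt {f : ℂ → ℂ} {U : Set ℂ} {w : ℂ}
    (hf : AnalyticOnNhd ℂ f U) (hU : IsPreconnected U) (h0 : ∃ z ∈ U, f z ≠ 0) (hw : w ∈ U) :
    (analyticOrderNatAt f w : ℕ∞) = analyticOrderAt f w := by
  obtain ⟨z, hz, hfz⟩ := h0
  exact Nat.cast_analyticOrderNatAt <| hf.analyticOrderAt_ne_top_of_isPreconnected hU hz hw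
    (by simp [analyticOrderAt_eq_zero.2 (Or.inr hfz)])

/-- Only meaningful where both orders are finite (`analyticOrderNatAt` sends `⊤` to `0`). -/
noncomputable def orderDiff (f g : ℂ → ℂ) (w : ℂ) : ℤ :=
  analyticOrderNatAt f w - analyticOrderNatAt g w

section OrderDiff

variable {f g : ℂ → ℂ} {r : ℝ} {c w : ℂ}

lemma orderDiff_eq_zero_of_ne_zero (hf : f w ≠ 0) (hg : g w ≠ 0) : orderDiff f g w = 0 := by
  simp [orderDiff, analyticOrderNatAt, analyticOrderAt_eq_zero.2 (Or.inr hf),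
    analyticOrderAt_eq_zero.2 (Or.inr hg)]

lemma orderDiff_sq_mul_conj (hf : AnalyticOnNhd ℂ f (ball 0 r)) (hg : AnalyticOnNhd ℂ g (ball 0 r))
    (hf0 : ∃ z ∈ ball 0 r, f z ≠ 0) (hg0 : ∃ z ∈ ball 0 r, g z ≠ 0) (hc : ‖c‖ = 1)
    (hfg : EqOn (f * schwarzReflection c f) (g * schwarzReflection c g) (ball 0 r))
    (hw : w ∈ ball 0 r) :
    orderDiff f g (c ^ 2 * conj w) = -orderDiff f g w := by
  have hw' : c ^ 2 * conj w ∈ ball 0 r := by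
    rwa [mem_ball_zero_iff, norm_sq_mul_conj hc, ← mem_ball_zero_iff]
  have hball := (convex_ball (0 : ℂ) r).isPreconnected
  have h := analyticOrderAt_add_analyticOrderAt_reflection_eq hf hg hc hfg hw
  rw [← hf.natCast_analyticOrderNatAt hball hf0 hw, ← hf.natCast_analyticOrderNatAt hball hf0 hw',
    ← hg.natCast_analyticOrderNatAt hball hg0 hw,
    ← hg.natCast_analyticOrderNatAt hball hg0 hw'] at h
  norm_cast at h
  simp only [orderDiff]
  omega

lemma orderDiff_sq_mul (hf : AnalyticOnNhd ℂ f (ball 0 r)) (hg : AnalyticOnNhd ℂ g (ball 0 r))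
    (hf0 : ∃ z ∈ ball 0 r, f z ≠ 0) (hg0 : ∃ z ∈ ball 0 r, g z ≠ 0) (hc : ‖c‖ = 1)
    (hfg₁ : EqOn (f * schwarzReflection 1 f) (g * schwarzReflection 1 g) (ball 0 r))
    (hfg : EqOn (f * schwarzReflection c f) (g * schwarzReflection c g) (ball 0 r))
    (hw : w ∈ ball 0 r) :
    orderDiff f g (c ^ 2 * w) = orderDiff f g w := by
  have hw' : conj w ∈ ball 0 r := by rwa [mem_ball_zero_iff, norm_conj, ← mem_ball_zero_iff]
  have hreal := orderDiff_sq_mul_conj hf hg hf0 hg0 norm_one hfg₁ hw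
  have hline := orderDiff_sq_mul_conj hf hg hf0 hg0 hc hfg hw'
  rw [one_pow, one_mul] at hreal
  rw [conj_conj] at hline
  rw [hline, hreal, neg_neg]

lemma orderDiff_eq_zero_of_rotation (hf : AnalyticOnNhd ℂ f (ball 0 r))
    (hg : AnalyticOnNhd ℂ g (ball 0 r)) (hf0 : ∃ z ∈ ball 0 r, f z ≠ 0)
    (hg0 : ∃ z ∈ ball 0 r, g z ≠ 0) {ρ : Circle} (hρ : ¬IsOfFinOrder ρ)
    (hinv : ∀ z ∈ ball 0 r, orderDiff f g (ρ * z) = orderDiff f g z)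
    (hw : w ∈ ball 0 r) (hw0 : w ≠ 0) : orderDiff f g w = 0 := by
  by_contra hD
  set orbit : ℕ → ℂ := fun k => ((ρ ^ k : Circle) : ℂ) * w
  have horbit_norm (k : ℕ) : ‖orbit k‖ = ‖w‖ := by simp [orbit, Circle.norm_coe]
  have horbit_mem (k : ℕ) : orbit k ∈ ball 0 r := by
    rw [mem_ball_zero_iff, horbit_norm]; exact mem_ball_zero_iff.1 hw
  have horbit_diff (k : ℕ) : orderDiff f g (orbit k) = orderDiff f g w := by
    induction k with
    | zero => simp [orbit]
    | succ k ih =>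
      rw [← ih, ← hinv _ (horbit_mem k)]
      simp [orbit, pow_succ', mul_assoc]
  have horbit_inj : Function.Injective orbit :=
    (mul_left_injective₀ hw0).comp <|
      Circle.coe_injective.comp (injective_pow_iff_not_isOfFinOrder.2 hρ)
  have hball := (convex_ball (0 : ℂ) r).isPreconnected
  have hnonzero : {z | f z ≠ 0 ∧ g z ≠ 0} ∈ codiscreteWithin (ball 0 r) :=
    ((hf.eqOn_zero_or_eventually_ne_zero_of_preconnected hball).resolve_left
      fun h => by obtain ⟨z, hz, hfz⟩ := hf0; exact hfz (h hz)).and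
    ((hg.eqOn_zero_or_eventually_ne_zero_of_preconnected hball).resolve_left
      fun h => by obtain ⟨z, hz, hgz⟩ := hg0; exact hgz (h hz))
  have hsphere : sphere (0 : ℂ) ‖w‖ ⊆ ball 0 r := sphere_subset_ball (mem_ball_zero_iff.1 hw)
  refine (Set.infinite_range_of_injective horbit_inj) <|
    ((isCompact_sphere 0 ‖w‖).finite_sdiff_of_mem_codiscreteWithin
      (codiscreteWithin_mono hsphere hnonzero)).subset ?_
  rintro _ ⟨k, rfl⟩
  refine ⟨by simp [horbit_norm], fun ⟨hfk, hgk⟩ => hD ?_⟩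
  rw [← horbit_diff k, orderDiff_eq_zero_of_ne_zero hfk hgk]

lemma analyticOrderAt_eq_of_eqOn_mul_schwarzReflection (hf : AnalyticOnNhd ℂ f (ball 0 r))
    (hg : AnalyticOnNhd ℂ g (ball 0 r)) (hf0 : ∃ z ∈ ball 0 r, f z ≠ 0)
    (hg0 : ∃ z ∈ ball 0 r, g z ≠ 0) {c : Circle} (hc : ¬IsOfFinOrder c)
    (hfg₁ : EqOn (f * schwarzReflection 1 f) (g * schwarzReflection 1 g) (ball 0 r))
    (hfg : EqOn (f * schwarzReflection c f) (g * schwarzReflection c g) (ball 0 r))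
    (hw : w ∈ ball 0 r) :
    analyticOrderAt f w = analyticOrderAt g w := by
  have hD : orderDiff f g w = 0 := by
    rcases eq_or_ne w 0 with rfl | hw0
    · have h0 := orderDiff_sq_mul_conj hf hg hf0 hg0 norm_one hfg₁ hw
      rw [map_zero, mul_zero] at h0
      omega
    · refine orderDiff_eq_zero_of_rotation hf hg hf0 hg0 (ρ := c ^ 2)
        (by rwa [isOfFinOrder_pow, or_iff_left two_ne_zero]) (fun z hz => ?_) hw hw0
      simpa using orderDiff_sq_mul hf hg hf0 hg0 (Circle.norm_coe c) hfg₁ hfg hz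
  have hball := (convex_ball (0 : ℂ) r).isPreconnected
  rw [← hf.natCast_analyticOrderNatAt hball hf0 hw, ← hg.natCast_analyticOrderNatAt hball hg0 hw]
  exact congrArg _ (by simp only [orderDiff] at hD; omega)

end OrderDiff

theorem stmt_16 (F G : ℂ → ℂ) (θ : ℝ) (hθ : Irrational (θ / Real.pi))
    (hF : DifferentiableOn ℂ F (Metric.ball (0 : ℂ) 1))
    (hG : DifferentiableOn ℂ G (Metric.ball (0 : ℂ) 1))
    (hF0 : ∃ w ∈ Metric.ball (0 : ℂ) 1, F w ≠ 0)
    (hG0 : ∃ w ∈ Metric.ball (0 : ℂ) 1, G w ≠ 0)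
    (h1 : ∀ x : ℝ, x ∈ Set.Ioo (-1 : ℝ) 1 → ‖F x‖ = ‖G x‖)
    (h2 : ∀ x : ℝ, x ∈ Set.Ioo (-1 : ℝ) 1 →
      ‖F (Complex.exp (θ * Complex.I) * x)‖ =
      ‖G (Complex.exp (θ * Complex.I) * x)‖) :
    ∀ w ∈ Metric.ball (0 : ℂ) 1, ∀ n : ℕ,
      ((∀ k ≤ n, iteratedDeriv k F w = 0) ↔ (∀ k ≤ n, iteratedDeriv k G w = 0)) := by
  intro w hw n
  have hFA := hF.analyticOnNhd isOpen_ball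
  have hGA := hG.analyticOnNhd isOpen_ball
  have horder : analyticOrderAt F w = analyticOrderAt G w :=
    analyticOrderAt_eq_of_eqOn_mul_schwarzReflection hFA hGA hF0 hG0
      (Circle.not_isOfFinOrder_exp hθ)
      (eqOn_mul_schwarzReflection hFA hGA one_pos norm_one (by simpa using h1))
      (eqOn_mul_schwarzReflection hFA hGA one_pos (Circle.norm_coe _) (by simpa using h2)) hw
  simp only [← Nat.lt_succ_iff]
  rw [← natCast_le_analyticOrderAt_iff_iteratedDeriv_eq_zero (hFA w hw),
    ← natCast_le_analyticOrderAt_iff_iteratedDeriv_eq_zero (hGA w hw), horder]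
end
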